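/- arXiv:1702.05819 — 8 statements merged into one kernel-verified Lean document; each statement's English description precedes it below -/
import Mathlib

section
/- For r ≥ 2, the polynomial equation x^r = x^{r-1} + x^{r-2} + ... + x + 1 has exactly one real root in the interval (1,2), and this root lies in the interval (2(1 - 2^{-r}), 2). -/
/-!
Dividing by `x ^ r`, a positive `x` is a root exactly when `x⁻¹ + x⁻² + ⋯ + x⁻ʳ = 1`, and the
left-hand side is strictly decreasing on `(0, ∞)`: this gives uniqueness, and a point `a` lies
below the root as soon as `a ^ r < 1 + a + ⋯ + a ^ (r - 1)`. Existence in `(1, 2)` is the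
intermediate value theorem. Multiplying by `a - 1`, that inequality at `a > 1` reads
`1 < a ^ r (2 - a)`; for `a = 2 (1 - c)` with `c = 2⁻ʳ` the right-hand side is `2 (1 - c) ^ r`,
and strict Bernoulli gives `(1 - c) ^ r > 1 - r c ≥ 1 / 2` because `2 r ≤ 2 ^ r`.
-/

open Finset Set

section Field

variable {K : Type*} [Field K]

lemma pow_mul_sum_inv_pow_succ (r : ℕ) {x : K} (hx : x ≠ 0) :
    x ^ r * ∑ i ∈ range r, x⁻¹ ^ (i + 1) = ∑ i ∈ range r, x ^ i := by
  rw [mul_sum, ← sum_range_reflect (fun i => x ^ i) r]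
  refine sum_congr rfl fun i hi => ?_
  rw [inv_pow, ← pow_sub₀ x hx (by simpa using hi : i + 1 ≤ r)]
  congr 1
  omega

end Field

section OrderedField

variable {K : Type*} [Field K] [LinearOrder K] [IsStrictOrderedRing K] {r : ℕ} {x y : K}

lemma strictAntiOn_sum_inv_pow_succ (hr : r ≠ 0) :
    StrictAntiOn (fun x : K => ∑ i ∈ range r, x⁻¹ ^ (i + 1)) (Ioi 0) := by
  intro x hx y hy hxy
  refine sum_lt_sum_of_nonempty (nonempty_range_iff.2 hr) fun i _ => ?_
  exact pow_lt_pow_left₀ (inv_strictAnti₀ hx hxy) (inv_pos.2 hy).le (Nat.succ_ne_zero i)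

lemma pow_eq_geom_sum_iff (hx : 0 < x) :
    x ^ r = ∑ i ∈ range r, x ^ i ↔ ∑ i ∈ range r, x⁻¹ ^ (i + 1) = 1 := by
  rw [← pow_mul_sum_inv_pow_succ r hx.ne', left_eq_mul₀ (pow_pos hx r).ne', eq_comm]

lemma pow_lt_geom_sum_iff (hx : 0 < x) :
    x ^ r < ∑ i ∈ range r, x ^ i ↔ 1 < ∑ i ∈ range r, x⁻¹ ^ (i + 1) := by
  rw [← pow_mul_sum_inv_pow_succ r hx.ne', lt_mul_iff_one_lt_right (pow_pos hx r)]

lemma eq_of_pow_eq_geom_sum (hr : r ≠ 0) (hx : 0 < x) (hy : 0 < y)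
    (hxr : x ^ r = ∑ i ∈ range r, x ^ i) (hyr : y ^ r = ∑ i ∈ range r, y ^ i) : x = y :=
  (strictAntiOn_sum_inv_pow_succ hr).injOn hx hy <| by
    rw [(pow_eq_geom_sum_iff hx).1 hxr, (pow_eq_geom_sum_iff hy).1 hyr]

lemma lt_of_pow_lt_geom_sum (hr : r ≠ 0) (hx : 0 < x) (hy : 0 < y)
    (hxr : x ^ r = ∑ i ∈ range r, x ^ i) (hyr : y ^ r < ∑ i ∈ range r, y ^ i) : y < x :=
  (strictAntiOn_sum_inv_pow_succ hr).lt_iff_gt hx hy |>.1 <| by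
    rw [(pow_eq_geom_sum_iff hx).1 hxr]
    exact (pow_lt_geom_sum_iff hy).1 hyr

lemma pow_lt_geom_sum_of_one_lt_pow_mul_two_sub (hx : 1 < x) (h : 1 < x ^ r * (2 - x)) :
    x ^ r < ∑ i ∈ range r, x ^ i := by
  refine lt_of_mul_lt_mul_right ?_ (sub_nonneg.2 hx.le)
  rw [geom_sum_mul]
  linear_combination h

end OrderedField

lemma exists_pow_eq_geom_sum_mem_Ioo {r : ℕ} (hr : 2 ≤ r) :
    ∃ x ∈ Ioo (1 : ℝ) 2, x ^ r = ∑ i ∈ range r, x ^ i := by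
  have hcont : ContinuousOn (fun x : ℝ => ∑ i ∈ range r, x ^ i - x ^ r) (Icc 1 2) := by fun_prop
  have h2 : ∑ i ∈ range r, (2 : ℝ) ^ i - 2 ^ r = -1 := by
    have := geom_sum_mul (2 : ℝ) r
    norm_num at this
    linarith
  have h1 : ∑ i ∈ range r, (1 : ℝ) ^ i - 1 ^ r = r - 1 := by simp
  have hr' : (2 : ℝ) ≤ r := by exact_mod_cast hr
  obtain ⟨x, hx, hx0⟩ := intermediate_value_Ioo' one_le_two hcont
    (show (0 : ℝ) ∈ Set.Ioo _ _ by rw [h1, h2]; constructor <;> linarith)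
  exact ⟨x, hx, (sub_eq_zero.1 hx0).symm⟩

lemma two_mul_le_two_pow (r : ℕ) : 2 * r ≤ 2 ^ r := by
  cases r with
  | zero => norm_num
  | succ k => rw [pow_succ']; exact Nat.mul_le_mul_left 2 k.lt_two_pow_self

lemma one_lt_two_mul_one_sub_inv_two_pow {r : ℕ} (hr : 2 ≤ r) :
    1 < 2 * (1 - ((2 : ℝ) ^ r)⁻¹) := by
  have : ((2 : ℝ) ^ r)⁻¹ < 2⁻¹ := inv_strictAnti₀ two_pos (lt_self_pow₀ one_lt_two (by omega))
  linarith

lemma one_lt_two_mul_one_sub_inv_two_pow_pow {r : ℕ} (hr : 2 ≤ r) :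
    1 < 2 * (1 - ((2 : ℝ) ^ r)⁻¹) ^ r := by
  set c : ℝ := ((2 : ℝ) ^ r)⁻¹
  have hc0 : 0 < c := by positivity
  have hc1 : c ≤ 1 := inv_le_one_of_one_le₀ (one_le_pow₀ one_le_two)
  have hrc : r * c ≤ 1 / 2 := by
    rw [← div_eq_mul_inv, div_le_iff₀ (by positivity)]
    have : (2 * r : ℝ) ≤ 2 ^ r := by exact_mod_cast two_mul_le_two_pow r
    linarith
  have hbern : 1 + r * -c < (1 + -c) ^ r := by
    simpa only [Real.rpow_natCast] using one_add_mul_self_lt_rpow_one_add (p := r)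
      (neg_le_neg hc1) (neg_ne_zero.2 hc0.ne') (by exact_mod_cast hr)
  rw [← sub_eq_add_neg] at hbern
  linarith

lemma pow_lt_geom_sum_two_mul_one_sub_inv_two_pow {r : ℕ} (hr : 2 ≤ r) :
    (2 * (1 - ((2 : ℝ) ^ r)⁻¹)) ^ r < ∑ i ∈ range r, (2 * (1 - ((2 : ℝ) ^ r)⁻¹)) ^ i := by
  refine pow_lt_geom_sum_of_one_lt_pow_mul_two_sub (one_lt_two_mul_one_sub_inv_two_pow hr) ?_
  have hval : (2 * (1 - ((2 : ℝ) ^ r)⁻¹)) ^ r * (2 - 2 * (1 - ((2 : ℝ) ^ r)⁻¹)) =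
      2 * (1 - ((2 : ℝ) ^ r)⁻¹) ^ r := by
    rw [mul_pow]
    linear_combination (2 * (1 - ((2 : ℝ) ^ r)⁻¹) ^ r) * mul_inv_cancel₀ (pow_ne_zero r (two_ne_zero' ℝ))
  rw [hval]
  exact one_lt_two_mul_one_sub_inv_two_pow_pow hr

theorem rnacci_char_root (r : ℕ) (hr : 2 ≤ r) :
    (∃! x : ℝ, x ∈ Set.Ioo (1 : ℝ) 2 ∧ x ^ r = ∑ i ∈ Finset.range r, x ^ i) ∧
    (∀ x : ℝ, x ∈ Set.Ioo (1 : ℝ) 2 → x ^ r = ∑ i ∈ Finset.range r, x ^ i →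
      x ∈ Set.Ioo (2 * (1 - (2 : ℝ) ^ (-(r : ℤ)))) 2) := by
  have hr0 : r ≠ 0 := by omega
  refine ⟨?_, fun x hx hxr => ⟨?_, hx.2⟩⟩
  · obtain ⟨x, hx, hxr⟩ := exists_pow_eq_geom_sum_mem_Ioo hr
    exact ⟨x, ⟨hx, hxr⟩, fun y ⟨hy, hyr⟩ =>
      eq_of_pow_eq_geom_sum hr0 (by linarith [hy.1]) (by linarith [hx.1]) hyr hxr⟩
  · rw [zpow_neg, zpow_natCast]
    exact lt_of_pow_lt_geom_sum hr0 (by linarith [hx.1])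
      (by linarith [one_lt_two_mul_one_sub_inv_two_pow hr]) hxr
      (pow_lt_geom_sum_two_mul_one_sub_inv_two_pow hr)
end

section
/- Let k ≥ 2 and let {t_n} be the 2k-nacci sequence. Then t_n is even if and only if n is divisible by 2k+1. -/
/-!
Modulo 2 the sequence agrees with the indicator of `2k + 1 ∤ n`. Indeed, the `2k` predecessors
`n - 1, …, n - 2k` of `n` cover every residue class mod `2k + 1` except that of `n`, so exactly one
of them is a multiple of `2k + 1` when `2k + 1 ∤ n` and none is otherwise. The recurrence therefore
adds up `2k - 1` (odd) resp. `2k` (even) odd terms, which reproduces the indicator.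
-/

open Finset

theorem eq_of_eq_sum_Icc_sub {R : Type*} [AddCommMonoid R] {d : ℕ} {f g : ℕ → R}
    (hinit : ∀ n < d, f n = g n)
    (hf : ∀ n, d ≤ n → f n = ∑ i ∈ Icc 1 d, f (n - i))
    (hg : ∀ n, d ≤ n → g n = ∑ i ∈ Icc 1 d, g (n - i)) : f = g := by
  funext n
  induction n using Nat.strong_induction_on with
  | _ n ih =>
    rcases lt_or_ge n d with hn | hn
    · exact hinit n hn
    · rw [hf n hn, hg n hn]
      refine sum_congr rfl fun i hi => ih _ ?_
      have := mem_Icc.1 hi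
      omega

theorem dvd_sub_iff_eq_mod {d n i : ℕ} (hid : i ≤ d) (hin : i ≤ n) :
    d + 1 ∣ n - i ↔ i = n % (d + 1) := by
  rw [← Nat.modEq_iff_dvd' hin, Nat.ModEq, Nat.mod_eq_of_lt (Nat.lt_succ_of_le hid)]

theorem card_filter_Icc_dvd_sub {d n : ℕ} (hn : d ≤ n) :
    #{i ∈ Icc 1 d | d + 1 ∣ n - i} = if d + 1 ∣ n then 0 else 1 := by
  rw [filter_congr fun i hi => dvd_sub_iff_eq_mod (mem_Icc.1 hi).2 ((mem_Icc.1 hi).2.trans hn),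
    filter_eq']
  have hmem : n % (d + 1) ∈ Icc 1 d ↔ ¬ d + 1 ∣ n := by
    rw [mem_Icc, Nat.dvd_iff_mod_eq_zero]
    have : n % (d + 1) < d + 1 := Nat.mod_lt n (Nat.zero_lt_succ d)
    omega
  by_cases h : d + 1 ∣ n <;> simp [h, hmem]

theorem sum_Icc_ite_dvd_sub {d n : ℕ} (hd : Even d) (hn : d ≤ n) :
    ∑ i ∈ Icc 1 d, (if d + 1 ∣ n - i then 0 else 1 : ZMod 2) = if d + 1 ∣ n then 0 else 1 := by
  -- Over an even number of terms, the non-multiples and the multiples have the same parity.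
  have hsplit : ∑ i ∈ Icc 1 d, (if d + 1 ∣ n - i then 0 else 1 : ZMod 2)
      + ∑ i ∈ Icc 1 d, (if d + 1 ∣ n - i then 1 else 0 : ZMod 2) = 0 := by
    have hterm : ∀ i ∈ Icc 1 d, ((if d + 1 ∣ n - i then 0 else 1 : ZMod 2)
        + if d + 1 ∣ n - i then 1 else 0) = 1 := fun i _ => by split_ifs <;> simp
    rw [← sum_add_distrib, sum_congr rfl hterm, sum_const, Nat.card_Icc, Nat.add_sub_cancel,
      nsmul_one, ZMod.natCast_eq_zero_iff_even.2 hd]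
  rw [eq_neg_of_add_eq_zero_left hsplit, ZMod.neg_eq_self_mod_two, sum_boole,
    card_filter_Icc_dvd_sub hn]
  split_ifs <;> simp

theorem twoknacci_even_iff_general (k : ℕ) (t : ℕ → ℕ)
    (h0 : t 0 = 0)
    (h1 : ∀ n, 1 ≤ n → n ≤ 2 * k - 1 → t n = 1)
    (hrec : ∀ n, 2 * k ≤ n → t n = ∑ i ∈ Finset.Icc 1 (2 * k), t (n - i)) :
    ∀ n : ℕ, Even (t n) ↔ (2 * k + 1) ∣ n := by
  have hparity : (fun n => (t n : ZMod 2)) = fun n => if 2 * k + 1 ∣ n then 0 else 1 := by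
    refine eq_of_eq_sum_Icc_sub (fun n hn => ?_) (fun n hn => by simp [hrec n hn])
      (fun n hn => (sum_Icc_ite_dvd_sub (even_two_mul k) hn).symm)
    rcases n.eq_zero_or_pos with rfl | hpos
    · simp [h0]
    · have hndvd : ¬ 2 * k + 1 ∣ n := fun h => hpos.ne' (Nat.eq_zero_of_dvd_of_lt h (by omega))
      simp [h1 n hpos (by omega), hndvd]
  intro n
  rw [← ZMod.natCast_eq_zero_iff_even, congrFun hparity n]
  split_ifs with h <;> simp [h]

theorem twoknacci_even_iff (k : ℕ) (hk : 2 ≤ k) (t : ℕ → ℕ)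
    (h0 : t 0 = 0)
    (h1 : ∀ n, 1 ≤ n → n ≤ 2 * k - 1 → t n = 1)
    (hrec : ∀ n, 2 * k ≤ n → t n = ∑ i ∈ Finset.Icc 1 (2 * k), t (n - i)) :
    ∀ n : ℕ, Even (t n) ↔ (2 * k + 1) ∣ n :=
  twoknacci_even_iff_general k t h0 h1 hrec
end

section
/- Let k ≥ 2 and let {t_n} be the 2k-nacci sequence. Then ν_2(t_n) = 1 whenever n ≡ 2k+1 (mod 2(2k+1)). -/
/-!
Write `q = 2k + 1`. Subtracting consecutive instances of the recurrence gives
`t (n + q) + t n = 2 t (n + 2k)`. Read modulo 2, this makes `t` periodic of period `q`, so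
`t (jq + 2k) ≡ t (2k) = 2k - 1` is odd; read modulo 4, it then gives
`t ((j + 1) q) ≡ 2 - t (jq)`, so starting from `t 0 = 0` the values `t (jq)` are alternately
`≡ 0` and `≡ 2 (mod 4)`. At odd multiples of `q` the value is `≡ 2 (mod 4)`, i.e. has valuation 1.
-/

open Finset

theorem padicValNat_two_eq_one_of_mod_four_eq_two {x : ℕ} (hx : x % 4 = 2) :
    padicValNat 2 x = 1 := by
  have hdecomp : x = 2 * (x / 2) := by omega
  rw [hdecomp, padicValNat.mul two_ne_zero (by omega), padicValNat_self,
    padicValNat.eq_zero_of_not_dvd (by omega)]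

section Recurrence

variable {m : ℕ} {t : ℕ → ℕ}

theorem window_sum_of_rec (hrec : ∀ n, m ≤ n → t n = ∑ i ∈ Icc 1 m, t (n - i)) (n : ℕ) :
    t (n + m) = ∑ j ∈ range m, t (n + j) := by
  rw [hrec (n + m) (by omega)]
  refine sum_nbij' (fun i ↦ m - i) (fun j ↦ m - j) ?_ ?_ ?_ ?_ ?_
  all_goals intro i hi; simp only [mem_Icc, mem_range] at hi ⊢
  all_goals first | omega | congr 1; omega

theorem add_eq_two_mul_of_rec (hrec : ∀ n, m ≤ n → t n = ∑ i ∈ Icc 1 m, t (n - i)) (n : ℕ) :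
    t (n + m + 1) + t n = 2 * t (n + m) := by
  have hshift : t (n + m + 1) = ∑ j ∈ range m, t (n + (j + 1)) := by
    rw [add_right_comm, window_sum_of_rec hrec (n + 1)]
    exact sum_congr rfl fun j _ ↦ congrArg t (by ring)
  calc t (n + m + 1) + t n
      = ∑ j ∈ range (m + 1), t (n + j) := by rw [sum_range_succ', hshift, add_zero]
    _ = 2 * t (n + m) := by rw [sum_range_succ, ← window_sum_of_rec hrec n, two_mul]

theorem mod_two_add_mul_of_rec (hrec : ∀ n, m ≤ n → t n = ∑ i ∈ Icc 1 m, t (n - i))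
    (n j : ℕ) : t (n + j * (m + 1)) % 2 = t n % 2 := by
  induction j with
  | zero => simp
  | succ j ih =>
    have hstep := add_eq_two_mul_of_rec hrec (n + j * (m + 1))
    rw [show n + (j + 1) * (m + 1) = n + j * (m + 1) + m + 1 by ring]
    omega

theorem mod_four_mul_of_rec (hrec : ∀ n, m ≤ n → t n = ∑ i ∈ Icc 1 m, t (n - i))
    (h0 : t 0 = 0) (hodd : Odd (t m)) (j : ℕ) : t (j * (m + 1)) % 4 = 2 * (j % 2) := by
  induction j with
  | zero => simp [h0]
  | succ j ih =>
    have hstep := add_eq_two_mul_of_rec hrec (j * (m + 1))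
    have hmid : t (j * (m + 1) + m) % 2 = 1 := by
      rw [add_comm, mod_two_add_mul_of_rec hrec, ← Nat.odd_iff]
      exact hodd
    rw [show (j + 1) * (m + 1) = j * (m + 1) + m + 1 by ring]
    omega

theorem self_eq_sub_one_of_rec (hrec : ∀ n, m ≤ n → t n = ∑ i ∈ Icc 1 m, t (n - i))
    (h0 : t 0 = 0) (h1 : ∀ n, 1 ≤ n → n ≤ m - 1 → t n = 1) : t m = m - 1 := by
  have hwindow : t m = ∑ j ∈ range m, t j := by simpa using window_sum_of_rec hrec 0
  cases m with
  | zero => exact h0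
  | succ m =>
    rw [hwindow, sum_range_succ', h0, add_zero, sum_congr rfl fun j hj ↦ h1 (j + 1) (by omega)
      (by simp only [mem_range] at hj; omega)]
    simp

end Recurrence

theorem twoknacci_val_one (k : ℕ) (hk : 2 ≤ k) (t : ℕ → ℕ)
    (h0 : t 0 = 0)
    (h1 : ∀ n, 1 ≤ n → n ≤ 2 * k - 1 → t n = 1)
    (hrec : ∀ n, 2 * k ≤ n → t n = ∑ i ∈ Finset.Icc 1 (2 * k), t (n - i)) :
    ∀ n : ℕ, n % (2 * (2 * k + 1)) = 2 * k + 1 → padicValNat 2 (t n) = 1 := by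
  intro n hn
  have hodd : Odd (t (2 * k)) := by
    rw [self_eq_sub_one_of_rec hrec h0 h1, Nat.odd_iff]
    omega
  have hn_odd_mul : n = (2 * (n / (2 * (2 * k + 1))) + 1) * (2 * k + 1) := by
    have hdiv := Nat.div_add_mod n (2 * (2 * k + 1))
    rw [hn] at hdiv
    linarith
  apply padicValNat_two_eq_one_of_mod_four_eq_two
  rw [hn_odd_mul, mod_four_mul_of_rec hrec h0 hodd]
  omega
end

section
/- Let k ≥ 2 and let {t_n} be the 2k-nacci sequence. Then ν_2(t_n) = ν_2(n) + ν_2(k-1) + 2 whenever n ≡ 0 (mod 2(2k+1)) and n > 0. -/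
/-!
Subtracting the recurrence at `n` from the one at `n + 1` gives
`t (n + 2k + 1) = 2 t (n + 2k) - t n`, so `X ^ (2k + 1) ≡ 2 X ^ 2k - 1` and
`t ((2k + 1) m) = ∑ i, C(m, i) 2 ^ i (-1) ^ (m - i) t (2k i)`. As
`∑ i, C(m, i) 2 ^ i (-1) ^ (m - i) = 1`, replacing `t` by `t - 1` leaves, for even `m`, the terms
`i = 0, 1` summing to `-4m(k - 1)`, of valuation `ν(m) + ν(k - 1) + 2 ≤ ν(m) + k`. Every other
term is divisible by `2 ^ (ν(m) + k + 1)`: the same recurrence propagates `2 ^ ρ ∣ t ρ - 1`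
(for `ρ < 2k`) to `2 ^ ρ ∣ t ((2k + 1) q + ρ) - 1`, which covers `i ≤ 2k` since
`2k i = (2k + 1)(i - 1) + (2k + 1 - i)`; for larger `i` the factor `2 ^ i` suffices, as
`ν(C(m, i)) ≥ ν(m) - ν(i)` and `2 ν(i) ≤ i`.
-/

open Finset

def IsDoublingRec (d : ℕ) (s : ℕ → ℤ) : Prop :=
  ∀ n, s (n + d + 1) = 2 * s (n + d) - s n

theorem add_eq_sum_range_of_eq_sum_Icc {d : ℕ} {t : ℕ → ℕ}
    (h : ∀ n, d ≤ n → t n = ∑ i ∈ Icc 1 d, t (n - i)) (n : ℕ) :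
    t (n + d) = ∑ j ∈ range d, t (n + j) := by
  rw [h _ (Nat.le_add_left d n), ← Ico_add_one_right_eq_Icc, sum_Ico_eq_sum_range,
    ← sum_range_reflect]
  refine sum_congr rfl fun j hj => ?_
  rw [mem_range] at hj
  congr 1
  omega

theorem isDoublingRec_of_eq_sum_Icc {d : ℕ} {t : ℕ → ℕ}
    (h : ∀ n, d ≤ n → t n = ∑ i ∈ Icc 1 d, t (n - i)) :
    IsDoublingRec d (fun n => (t n : ℤ)) := by
  intro n
  have window := add_eq_sum_range_of_eq_sum_Icc h
  have split := (sum_range_succ (fun j => t (n + j)) d).symm.trans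
    (sum_range_succ' (fun j => t (n + j)) d)
  show (t (n + d + 1) : ℤ) = 2 * t (n + d) - t n
  rw [add_right_comm, window (n + 1)]
  simp only [add_zero, ← add_assoc, add_right_comm n 1] at split ⊢
  push_cast
  linarith [window n]

namespace IsDoublingRec

variable {d : ℕ} {s : ℕ → ℤ}

theorem sub_const (hs : IsDoublingRec d s) (c : ℤ) : IsDoublingRec d (fun n => s n - c) := by
  intro n
  simp only [hs n]
  ring

theorem apply_mul_add (hs : IsDoublingRec d s) (m n : ℕ) :
    s ((d + 1) * m + n) =
      ∑ i ∈ range (m + 1), (m.choose i : ℤ) * (2 ^ i * (-1) ^ (m - i) * s (n + d * i)) := by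
  induction m generalizing n with
  | zero => simp
  | succ m ih =>
    let f : ℕ → ℕ → ℤ := fun i j => 2 ^ i * (-1) ^ j * s (n + d * i)
    calc s ((d + 1) * (m + 1) + n)
        = 2 * s ((d + 1) * m + (n + d)) - s ((d + 1) * m + n) := by
          rw [show (d + 1) * (m + 1) + n = (d + 1) * m + n + d + 1 by ring, hs, add_assoc _ n]
      _ = ∑ i ∈ range (m + 1), (m.choose i : ℤ) * f i (m + 1 - i) +
            ∑ i ∈ range (m + 1), (m.choose i : ℤ) * f (i + 1) (m - i) := by
          rw [ih, ih, mul_sum, sub_eq_neg_add, ← sum_neg_distrib]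
          congr 1 <;> refine sum_congr rfl fun i hi => ?_
          · rw [Nat.sub_add_comm (mem_range_succ_iff.mp hi)]
            ring
          · simp only [f]
            ring_nf
      _ = _ := (sum_choose_succ_mul f m).symm

theorem two_pow_dvd_apply_mul_add (hs : IsDoublingRec d s) (h : ∀ ρ < d, (2 : ℤ) ^ ρ ∣ s ρ)
    (q : ℕ) {ρ : ℕ} (hρ : ρ < d) : (2 : ℤ) ^ ρ ∣ s ((d + 1) * q + ρ) := by
  induction q generalizing ρ with
  | zero => simpa using h ρ hρ
  | succ q ih =>
    induction ρ with
    | zero => simp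
    | succ ρ ihρ =>
      have hrec : s ((d + 1) * (q + 1) + (ρ + 1)) =
          2 * s ((d + 1) * (q + 1) + ρ) - s ((d + 1) * q + (ρ + 1)) := by
        rw [show (d + 1) * (q + 1) + (ρ + 1) = (d + 1) * q + (ρ + 1) + d + 1 by ring, hs]
        ring_nf
      rw [hrec]
      exact dvd_sub (by rw [pow_succ']; exact mul_dvd_mul_left 2 (ihρ (by omega))) (ih hρ)

theorem two_pow_dvd_apply_mul (hs : IsDoublingRec d s) (h : ∀ ρ < d, (2 : ℤ) ^ ρ ∣ s ρ)
    {i : ℕ} (hi : 2 ≤ i) : (2 : ℤ) ^ (d + 1 - i) ∣ s (d * i) := by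
  rcases le_or_gt i (d + 1) with hid | hid
  · obtain ⟨q, rfl⟩ : ∃ q, i = q + 1 := ⟨i - 1, by omega⟩
    obtain ⟨r, rfl⟩ : ∃ r, d = q + r := ⟨d - q, by omega⟩
    convert hs.two_pow_dvd_apply_mul_add h q (ρ := r) (by omega) using 2
    · omega
    · ring_nf
  · simp [Nat.sub_eq_zero_of_le hid.le]

theorem apply_mul_of_even (hs : IsDoublingRec d s) {m : ℕ} (hm : Even m) (hm0 : m ≠ 0) :
    s ((d + 1) * m) = s 0 - 2 * m * s d +
      ∑ i ∈ Ico 2 (m + 1), (m.choose i : ℤ) * (2 ^ i * (-1) ^ (m - i) * s (d * i)) := by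
  have hodd : Odd (m - 1) := Nat.Even.sub_odd (by omega) hm odd_one
  rw [← add_zero ((d + 1) * m), hs.apply_mul_add, range_eq_Ico,
    sum_eq_sum_Ico_succ_bot (by omega), sum_eq_sum_Ico_succ_bot (by omega)]
  simp [hm.neg_one_pow, hodd.neg_one_pow]
  ring

end IsDoublingRec

theorem pow_padicValNat_dvd_pow_mul_choose {p : ℕ} [Fact p.Prime] {m i : ℕ} (hi : i ≠ 0)
    (him : i ≤ m) : p ^ padicValNat p m ∣ p ^ padicValNat p i * m.choose i := by
  obtain ⟨i, rfl⟩ := Nat.exists_eq_add_one_of_ne_zero hi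
  obtain ⟨m, rfl⟩ : ∃ m', m = m' + 1 := ⟨m - 1, by omega⟩
  have hc : (m + 1).choose (i + 1) ≠ 0 := (Nat.choose_pos him).ne'
  have hc' : m.choose i ≠ 0 := (Nat.choose_pos (by omega)).ne'
  have hpow : p ^ padicValNat p (i + 1) ≠ 0 := pow_ne_zero _ (Fact.out : p.Prime).ne_zero
  have key := congrArg (padicValNat p) (Nat.add_one_mul_choose_eq m i)
  rw [padicValNat.mul (by omega) hc', padicValNat.mul hc (by omega)] at key
  rw [padicValNat_dvd_iff_le (mul_ne_zero hpow hc), padicValNat.mul hpow hc,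
    padicValNat.prime_pow]
  omega

theorem two_mul_padicValNat_two_le (i : ℕ) : 2 * padicValNat 2 i ≤ i := by
  rcases eq_or_ne i 0 with rfl | hi
  · simp
  have hle : 2 ^ padicValNat 2 i ≤ i := Nat.le_of_dvd (Nat.pos_of_ne_zero hi) pow_padicValNat_dvd
  cases h : padicValNat 2 i with
  | zero => omega
  | succ b =>
    have := Nat.lt_two_pow_self (n := b)
    rw [h, pow_succ] at hle
    omega

theorem two_pow_dvd_choose_mul {k m i : ℕ} (hi : i ≠ 0) (him : i ≤ m) {x : ℤ}
    (hx : (2 : ℤ) ^ (2 * k + 1 - i) ∣ x) :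
    (2 : ℤ) ^ (padicValNat 2 m + k + 1) ∣ m.choose i * 2 ^ i * x := by
  have hchoose : (2 : ℤ) ^ padicValNat 2 m ∣ 2 ^ padicValNat 2 i * m.choose i := by
    exact_mod_cast pow_padicValNat_dvd_pow_mul_choose hi him
  have hv := two_mul_padicValNat_two_le i
  calc (2 : ℤ) ^ (padicValNat 2 m + k + 1)
      ∣ 2 ^ (padicValNat 2 m + (i - padicValNat 2 i) + (2 * k + 1 - i)) :=
        pow_dvd_pow 2 (by omega)
    _ ∣ 2 ^ padicValNat 2 i * m.choose i * 2 ^ (i - padicValNat 2 i) * x := by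
        rw [pow_add, pow_add]
        exact mul_dvd_mul (mul_dvd_mul hchoose dvd_rfl) hx
    _ = m.choose i * 2 ^ i * x := by
        rw [mul_comm (2 ^ padicValNat 2 i : ℤ), mul_assoc (m.choose i : ℤ),
          pow_mul_pow_sub 2 (by omega)]

theorem padicValInt_eq_of_pow_dvd_add {p : ℕ} [Fact p.Prime] {x y : ℤ} (hy : y ≠ 0)
    (h : (p : ℤ) ^ (padicValInt p y + 1) ∣ x + y) : padicValInt p x = padicValInt p y := by
  have hy_dvd : (p : ℤ) ^ padicValInt p y ∣ y := (padicValInt_dvd_iff _ y).2 (Or.inr le_rfl)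
  have hy_ndvd : ¬ (p : ℤ) ^ (padicValInt p y + 1) ∣ y := fun hd => by
    rcases (padicValInt_dvd_iff _ y).1 hd with h0 | hle
    · exact hy h0
    · omega
  have hx_ndvd : ¬ (p : ℤ) ^ (padicValInt p y + 1) ∣ x := fun hd =>
    hy_ndvd (by simpa using dvd_sub h hd)
  have hx_dvd : (p : ℤ) ^ padicValInt p y ∣ x := by
    simpa using dvd_sub ((pow_dvd_pow _ (Nat.le_succ _)).trans h) hy_dvd
  rcases (padicValInt_dvd_iff _ x).1 hx_dvd with hx0 | hle
  · exact absurd (hx0 ▸ dvd_zero _) hx_ndvd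
  · refine le_antisymm (not_lt.1 fun hlt => hx_ndvd ?_) hle
    exact (padicValInt_dvd_iff _ x).2 (Or.inr hlt)

structure IsTwoKnacci (k : ℕ) (t : ℕ → ℕ) : Prop where
  apply_zero : t 0 = 0
  apply_of_le : ∀ n, 1 ≤ n → n ≤ 2 * k - 1 → t n = 1
  apply_eq_sum : ∀ n, 2 * k ≤ n → t n = ∑ i ∈ Icc 1 (2 * k), t (n - i)

namespace IsTwoKnacci

variable {k : ℕ} {t : ℕ → ℕ}

theorem apply_two_mul (ht : IsTwoKnacci k t) (hk : k ≠ 0) : t (2 * k) = 2 * k - 1 := by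
  obtain ⟨r, hr⟩ : ∃ r, 2 * k = r + 1 := ⟨2 * k - 1, by omega⟩
  rw [← zero_add (2 * k), add_eq_sum_range_of_eq_sum_Icc ht.apply_eq_sum, hr, sum_range_succ']
  simp only [zero_add, ht.apply_zero, add_zero]
  rw [sum_congr rfl fun j hj =>
    ht.apply_of_le (j + 1) (by omega) (by rw [mem_range] at hj; omega)]
  simp

theorem isDoublingRec_sub_one (ht : IsTwoKnacci k t) :
    IsDoublingRec (2 * k) (fun n => (t n : ℤ) - 1) :=
  (isDoublingRec_of_eq_sum_Icc ht.apply_eq_sum).sub_const 1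

theorem two_pow_dvd_apply_sub_one (ht : IsTwoKnacci k t) {ρ : ℕ} (hρ : ρ < 2 * k) :
    (2 : ℤ) ^ ρ ∣ (t ρ : ℤ) - 1 := by
  rcases ρ with _ | ρ
  · simp
  · simp [ht.apply_of_le (ρ + 1) (by omega) (by omega)]

theorem two_pow_dvd_apply_mul_add_four_mul (ht : IsTwoKnacci k t) (hk : k ≠ 0) {m : ℕ}
    (hm : Even m) (hm0 : m ≠ 0) :
    (2 : ℤ) ^ (padicValNat 2 m + k + 1) ∣
      (t ((2 * k + 1) * m) : ℤ) + (4 * m * (k - 1) : ℕ) := by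
  have hexp := ht.isDoublingRec_sub_one.apply_mul_of_even hm hm0
  simp only [ht.apply_zero, ht.apply_two_mul hk] at hexp
  have hsum : (t ((2 * k + 1) * m) : ℤ) + (4 * m * (k - 1) : ℕ) =
      ∑ i ∈ Ico 2 (m + 1),
        (m.choose i : ℤ) * (2 ^ i * (-1) ^ (m - i) * (t (2 * k * i) - 1)) := by
    push_cast [Nat.one_le_iff_ne_zero.2 hk, show 1 ≤ 2 * k by omega] at hexp ⊢
    linarith
  rw [hsum]
  refine dvd_sum fun i hi => ?_
  rw [mem_Ico] at hi
  have hterm := ht.isDoublingRec_sub_one.two_pow_dvd_apply_mul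
    (fun _ hρ => ht.two_pow_dvd_apply_sub_one hρ) hi.1
  exact (two_pow_dvd_choose_mul (by omega) (by omega) hterm).trans ⟨(-1) ^ (m - i), by ring⟩

end IsTwoKnacci

theorem twoknacci_val_formula (k : ℕ) (hk : 2 ≤ k) (t : ℕ → ℕ)
    (h0 : t 0 = 0)
    (h1 : ∀ n, 1 ≤ n → n ≤ 2 * k - 1 → t n = 1)
    (hrec : ∀ n, 2 * k ≤ n → t n = ∑ i ∈ Finset.Icc 1 (2 * k), t (n - i)) :
    ∀ n : ℕ, 0 < n → (2 * (2 * k + 1)) ∣ n →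
      padicValNat 2 (t n) = padicValNat 2 n + padicValNat 2 (k - 1) + 2 := by
  rintro n hn ⟨c, rfl⟩
  have hm : Even (2 * c) := even_two_mul c
  rw [show 2 * (2 * k + 1) * c = (2 * k + 1) * (2 * c) by ring] at hn ⊢
  generalize 2 * c = m at hn hm ⊢
  have hm0 : m ≠ 0 := by
    rintro rfl
    simp at hn
  have hk1 : k - 1 ≠ 0 := by omega
  have hdvd := IsTwoKnacci.two_pow_dvd_apply_mul_add_four_mul ⟨h0, h1, hrec⟩ (by omega) hm hm0
  have hval_k : padicValNat 2 (k - 1) + 2 ≤ k := by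
    have := Nat.padicValNat_lt_self (p := 2) hk1
    omega
  have hval_main :
      padicValNat 2 (4 * m * (k - 1)) = padicValNat 2 m + padicValNat 2 (k - 1) + 2 := by
    rw [padicValNat.mul (by positivity) hk1, padicValNat.mul (by norm_num) hm0,
      show 4 = 2 ^ 2 by rfl, padicValNat.prime_pow]
    ring
  have key := padicValInt_eq_of_pow_dvd_add (p := 2)
    (Int.natCast_ne_zero.2 (by positivity : 4 * m * (k - 1) ≠ 0))
    (by
      rw [padicValInt.of_nat, hval_main, Nat.cast_ofNat]
      exact (pow_dvd_pow 2 (by omega)).trans hdvd)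
  rw [padicValInt.of_nat, padicValInt.of_nat, hval_main] at key
  rw [key, padicValNat.mul (by omega) hm0,
    padicValNat.eq_zero_of_not_dvd (by omega : ¬ 2 ∣ 2 * k + 1), zero_add]
end

section
/- Let k ≥ 2 and let {t_n} be the 2k-nacci sequence. Let B_0 be the 2k × 2k Hankel matrix with (i,j)-entry t_{i+j} for 0 ≤ i, j ≤ 2k-1. Then det(B_0) is odd; in particular B_0 is invertible over the rationals. -/
/-!
Summing the recurrence at `n + 2k + 1` and at `n + 2k` gives
`t (n + 2k + 1) + t n = 2 t (n + 2k)`, so `t` is `(2k+1)`-periodic mod 2, and the initial values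
show that `t n` is even exactly when `2k + 1 ∣ n`. As `i + j < 2 (2k + 1)`, mod 2 row `1` of `B₀`
is the all-ones row and every other row `i` is the all-ones row minus the unit vector at the index `j`
with `i + j ∈ {0, 2k + 1}`; these indices form a permutation of `Fin (2k)`. Subtracting row `1`
from the other rows leaves minus a permutation matrix with one row replaced by the all-ones
row, which is minus the sum of its rows, so `det B₀ ≡ ±1 (mod 2)`.
-/

open Finset Matrix Equiv

theorem Nat.dvd_iff_eq_zero_or_eq_of_lt_two_mul {m s : ℕ} (hs : s < 2 * m) :
    m ∣ s ↔ s = 0 ∨ s = m := by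
  refine ⟨fun h => ?_, by rintro (rfl | rfl) <;> simp⟩
  by_cases hsm : s < m
  · exact .inl (Nat.eq_zero_of_dvd_of_lt h hsm)
  · have := Nat.eq_zero_of_dvd_of_lt (Nat.dvd_sub h dvd_rfl) (by omega)
    omega

theorem Finset.sum_Icc_one_eq_sum_range {M : Type*} [AddCommMonoid M] (f : ℕ → M) (N : ℕ) :
    ∑ i ∈ Icc 1 N, f i = ∑ i ∈ range N, f (i + 1) := by
  rw [← Ico_add_one_right_eq_Icc, sum_Ico_eq_sum_range, Nat.add_sub_cancel]
  simp only [add_comm]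

section LinearRecurrence

variable {N : ℕ} {t : ℕ → ℕ}

theorem add_eq_two_mul_of_eq_sum_Icc (hrec : ∀ n, N ≤ n → t n = ∑ i ∈ Icc 1 N, t (n - i))
    (n : ℕ) : t (n + N + 1) + t n = 2 * t (n + N) := by
  have hnext : t (n + N + 1) = ∑ i ∈ range N, t (n + N - i) := by
    rw [hrec _ (by omega), sum_Icc_one_eq_sum_range]
    exact sum_congr rfl fun i _ => by congr 1; omega
  have hcur : t (n + N) = ∑ i ∈ range N, t (n + N - (i + 1)) := by
    rw [hrec _ (by omega), sum_Icc_one_eq_sum_range]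
  calc t (n + N + 1) + t n = ∑ i ∈ range (N + 1), t (n + N - i) := by
        rw [sum_range_succ, hnext, Nat.add_sub_cancel]
    _ = t (n + N) + t (n + N) := by rw [sum_range_succ', ← hcur, Nat.sub_zero]
    _ = 2 * t (n + N) := (two_mul _).symm

theorem periodic_cast_zmod_two_of_eq_sum_Icc
    (hrec : ∀ n, N ≤ n → t n = ∑ i ∈ Icc 1 N, t (n - i)) :
    Function.Periodic (fun n => (t n : ZMod 2)) (N + 1) := by
  intro n
  have h := congrArg (Nat.cast : ℕ → ZMod 2) (add_eq_two_mul_of_eq_sum_Icc hrec n)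
  push_cast at h
  reduce_mod_char at h
  simpa [← add_assoc] using CharTwo.add_eq_zero.mp h

theorem eq_sub_one_of_eq_sum_Icc (hN : 1 ≤ N) (h0 : t 0 = 0)
    (h1 : ∀ n, 1 ≤ n → n ≤ N - 1 → t n = 1)
    (hrec : ∀ n, N ≤ n → t n = ∑ i ∈ Icc 1 N, t (n - i)) :
    t N = N - 1 := by
  obtain ⟨M, rfl⟩ : ∃ M, N = M + 1 := ⟨N - 1, by omega⟩
  rw [hrec _ le_rfl, sum_Icc_one_eq_sum_range, sum_range_succ, Nat.sub_self, h0, add_zero]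
  calc ∑ i ∈ range M, t (M + 1 - (i + 1)) = ∑ i ∈ range M, 1 :=
        sum_congr rfl fun i hi => h1 _ (by simp at hi; omega) (by omega)
    _ = M + 1 - 1 := by simp

end LinearRecurrence

theorem twoknacci_cast_zmod_two {k : ℕ} (hk : 1 ≤ k) {t : ℕ → ℕ} (h0 : t 0 = 0)
    (h1 : ∀ n, 1 ≤ n → n ≤ 2 * k - 1 → t n = 1)
    (hrec : ∀ n, 2 * k ≤ n → t n = ∑ i ∈ Icc 1 (2 * k), t (n - i)) (n : ℕ) :
    (t n : ZMod 2) = if 2 * k + 1 ∣ n then 0 else 1 := by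
  rw [← (periodic_cast_zmod_two_of_eq_sum_Icc hrec).map_mod_nat n]
  simp only [Nat.dvd_iff_mod_eq_zero]
  have hlt : n % (2 * k + 1) < 2 * k + 1 := Nat.mod_lt _ (by omega)
  generalize n % (2 * k + 1) = r at hlt ⊢
  rcases Nat.lt_or_ge r (2 * k) with hr | hr
  · rcases Nat.eq_zero_or_pos r with rfl | hpos
    · simp [h0]
    · simp [h1 r hpos (by omega), hpos.ne']
  · obtain rfl : r = 2 * k := by omega
    rw [eq_sub_one_of_eq_sum_Icc (by omega) h0 h1 hrec, if_neg (by omega),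
      ZMod.natCast_eq_one_iff_odd]
    exact ⟨k - 1, by omega⟩

theorem Matrix.det_eq_of_row_eq_one_of_rows_eq_one_sub_permMatrix {n R : Type*} [Fintype n]
    [DecidableEq n] [CommRing R] (M : Matrix n n R) (σ : Perm n) (r : n) (hr : M r = 1)
    (hM : ∀ i ≠ r, M i = 1 - σ.permMatrix R i) :
    M.det = -((-1) ^ Fintype.card n * Perm.sign σ) := by
  set P := σ.permMatrix R
  have hcolumns : (1 : n → R) = ∑ l, (-1 : R) • (-P) l := by
    ext j
    simp [P, PEquiv.toMatrix_apply, Equiv.toPEquiv_apply, Finset.sum_apply, ← Equiv.eq_symm_apply]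
  calc M.det = (updateRow (-P) r 1).det := by
        refine det_eq_of_forall_row_eq_smul_add_const (fun i => if i = r then 0 else 1) r
          (if_pos rfl) fun i j => ?_
        by_cases hi : i = r
        · subst hi; simp [hr]
        · simp [hi, hM i hi, sub_eq_neg_add]
    _ = -((-1) ^ Fintype.card n * Perm.sign σ) := by
        rw [hcolumns, det_updateRow_sum, det_neg, det_permutation]
        simp

def reflectAboveOne (m : ℕ) (i : Fin m) : Fin m :=
  if h : (i : ℕ) ≤ 1 then i else ⟨m + 1 - i, by have := i.isLt; omega⟩

theorem reflectAboveOne_involutive (m : ℕ) : Function.Involutive (reflectAboveOne m) := by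
  intro i
  unfold reflectAboveOne
  split_ifs <;> ext <;> simp_all <;> omega

theorem reflectAboveOne_eq_iff_dvd {m : ℕ} {i j : Fin m} (hi : (i : ℕ) ≠ 1) :
    reflectAboveOne m i = j ↔ m + 1 ∣ i + j := by
  rw [Nat.dvd_iff_eq_zero_or_eq_of_lt_two_mul (by omega), reflectAboveOne]
  split_ifs <;> rw [Fin.ext_iff] <;> simp <;> omega

theorem twoknacci_hankel_det_odd (k : ℕ) (hk : 2 ≤ k) (t : ℕ → ℕ)
    (h0 : t 0 = 0)
    (h1 : ∀ n, 1 ≤ n → n ≤ 2 * k - 1 → t n = 1)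
    (hrec : ∀ n, 2 * k ≤ n → t n = ∑ i ∈ Finset.Icc 1 (2 * k), t (n - i))
    (B0 : Matrix (Fin (2 * k)) (Fin (2 * k)) ℤ)
    (hB0 : ∀ i j, B0 i j = t ((i : ℕ) + (j : ℕ))) :
    Odd B0.det ∧ IsUnit (B0.map ((↑) : ℤ → ℚ)).det := by
  set σ := (reflectAboveOne_involutive (2 * k)).toPerm
  have hentry (i j : Fin (2 * k)) :
      B0.map (Int.cast : ℤ → ZMod 2) i j = if 2 * k + 1 ∣ i + j then 0 else 1 := by
    simp [hB0, twoknacci_cast_zmod_two (by omega) h0 h1 hrec]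
  have hdet : (B0.det : ZMod 2) = -((-1) ^ Fintype.card (Fin (2 * k)) * Perm.sign σ) := by
    rw [Int.cast_det]
    refine det_eq_of_row_eq_one_of_rows_eq_one_sub_permMatrix _ σ ⟨1, by omega⟩ ?_ ?_
    · ext j
      rw [hentry, if_neg (Nat.not_dvd_of_pos_of_lt (by simp) (by simp; omega))]
      rfl
    · intro i hi
      ext j
      have hi' : (i : ℕ) ≠ 1 := fun h => hi (Fin.ext h)
      simp only [hentry, ← reflectAboveOne_eq_iff_dvd hi']
      by_cases hij : reflectAboveOne (2 * k) i = j <;> simp [σ, hij]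
  have hodd : Odd B0.det := by
    rw [← ZMod.intCast_eq_one_iff_odd, hdet]
    rcases Int.units_eq_one_or (Perm.sign σ) with h | h <;> simp [h]
  refine ⟨hodd, ?_⟩
  rw [← Int.cast_det, isUnit_iff_ne_zero, Int.cast_ne_zero]
  exact fun h => by simp [h] at hodd
end

section
/- Let k ≥ 2 and let C be the (2k)×(2k) companion matrix of the 2k-nacci recurrence (with 1's on the superdiagonal and 1's in the bottom row, 0's elsewhere). Then C^{2k+1} = 2M − L, where M is the matrix with (i,j)-entry 2^i (rows indexed 0 to 2k-1, all columns equal), and L is the lower-triangular matrix with (i,j)-entry 2^{i-j} for i ≥ j and 0 for i < j. -/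
/-- Multiplying on the right by the companion matrix shifts columns. -/
lemma mulC_aux {n : ℕ} (hn : 1 ≤ n) (C : Matrix (Fin n) (Fin n) ℤ)
    (hC : ∀ i j, C i j = if (j : ℕ) = (i : ℕ) + 1 then 1 else if (i : ℕ) = n - 1 then 1 else 0)
    (A : Matrix (Fin n) (Fin n) ℤ) (r j : Fin n) :
    (A * C) r j =
      (if h : 1 ≤ (j : ℕ) then A r ⟨(j : ℕ) - 1, lt_of_le_of_lt (Nat.sub_le _ _) j.isLt⟩ else 0)
        + A r ⟨n - 1, Nat.sub_lt hn one_pos⟩ := by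
  set b : Fin n := ⟨n - 1, Nat.sub_lt hn one_pos⟩ with hb
  rw [Matrix.mul_apply]
  have key : ∀ t : Fin n, A r t * C t j =
      (if (t : ℕ) + 1 = (j : ℕ) then A r t else 0) + (if t = b then A r t else 0) := by
    intro t
    rw [hC]
    have hj := j.isLt
    have ht := t.isLt
    have hbt : t = b ↔ (t : ℕ) = n - 1 := by
      constructor
      · intro h; rw [h]
      · intro h; exact Fin.ext h
    by_cases h1 : (j : ℕ) = (t : ℕ) + 1
    · rw [if_pos h1, if_pos (by omega), if_neg (by rw [hbt]; omega)]; ring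
    · by_cases h3 : (t : ℕ) = n - 1
      · rw [if_neg h1, if_pos h3, if_neg (by omega), if_pos (hbt.mpr h3)]; ring
      · rw [if_neg h1, if_neg h3, if_neg (by omega), if_neg (fun h => h3 (hbt.mp h))]; ring
  rw [Finset.sum_congr rfl (fun t _ => key t), Finset.sum_add_distrib]
  congr 1
  · by_cases hj : 1 ≤ (j : ℕ)
    · rw [dif_pos hj]
      set c : Fin n := ⟨(j : ℕ) - 1, lt_of_le_of_lt (Nat.sub_le _ _) j.isLt⟩ with hc
      have key2 : ∀ t : Fin n, (if (t : ℕ) + 1 = (j : ℕ) then A r t else 0)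
          = (if t = c then A r t else 0) := by
        intro t
        have hcc : ((t : ℕ) + 1 = (j : ℕ)) ↔ t = c := by
          rw [Fin.ext_iff]
          show (t : ℕ) + 1 = (j : ℕ) ↔ (t : ℕ) = (j : ℕ) - 1
          omega
        rw [if_congr hcc rfl rfl]
      rw [Finset.sum_congr rfl (fun t _ => key2 t), Finset.sum_ite_eq' Finset.univ c]
      simp
    · rw [dif_neg hj]
      apply Finset.sum_eq_zero
      intro t _
      rw [if_neg]; omega
  · rw [Finset.sum_ite_eq' Finset.univ b]; simp

/-- Powers of the companion matrix shift basis rows. -/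
lemma shift_aux {n : ℕ} (hn : 1 ≤ n) (C : Matrix (Fin n) (Fin n) ℤ)
    (hC : ∀ i j, C i j = if (j : ℕ) = (i : ℕ) + 1 then 1 else if (i : ℕ) = n - 1 then 1 else 0)
    (m : ℕ) : ∀ i j : Fin n, (i : ℕ) + m ≤ n - 1 →
      (C ^ m) i j = if (j : ℕ) = (i : ℕ) + m then 1 else 0 := by
  induction m with
  | zero =>
    intro i j _
    rw [pow_zero, Matrix.one_apply]
    have hiff : (i = j) ↔ ((j : ℕ) = (i : ℕ) + 0) := by
      rw [Fin.ext_iff]; omega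
    rw [if_congr hiff rfl rfl]
  | succ m ih =>
    intro i j hm
    rw [pow_succ, mulC_aux hn C hC]
    have hbound : (i : ℕ) + m ≤ n - 1 := by omega
    have hlast : (C ^ m) i ⟨n - 1, Nat.sub_lt hn one_pos⟩ = 0 := by
      rw [ih i _ hbound, if_neg]
      show ¬ (n - 1 : ℕ) = (i : ℕ) + m
      omega
    rw [hlast, add_zero]
    by_cases hj : 1 ≤ (j : ℕ)
    · rw [dif_pos hj, ih i _ hbound]
      show (if (j : ℕ) - 1 = (i : ℕ) + m then (1 : ℤ) else 0)
        = if (j : ℕ) = (i : ℕ) + (m + 1) then 1 else 0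
      have hjlt := j.isLt
      split_ifs <;> first | rfl | omega
    · rw [dif_neg hj, if_neg]; omega

/-- The bottom row of `C ^ (i + 2)`. -/
lemma row_aux {n : ℕ} (hn : 1 ≤ n) (C : Matrix (Fin n) (Fin n) ℤ)
    (hC : ∀ i j, C i j = if (j : ℕ) = (i : ℕ) + 1 then 1 else if (i : ℕ) = n - 1 then 1 else 0)
    (i : ℕ) : i ≤ n - 1 → ∀ j : Fin n,
      (C ^ (i + 2)) ⟨n - 1, Nat.sub_lt hn one_pos⟩ j
        = 2 ^ (i + 1) - (if (j : ℕ) ≤ i then 2 ^ (i - (j : ℕ)) else 0) := by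
  induction i with
  | zero =>
    intro _ j
    have hCrow : ∀ t : Fin n, C ⟨n - 1, Nat.sub_lt hn one_pos⟩ t = 1 := by
      intro t
      rw [hC]
      have ht := t.isLt
      rw [if_neg (show ¬ (t : ℕ) = (n - 1) + 1 by omega),
        if_pos (show (n - 1 : ℕ) = n - 1 from rfl)]
    rw [show (0 + 2 : ℕ) = 1 + 1 by rfl, pow_succ, pow_one, mulC_aux hn C hC]
    by_cases hj : 1 ≤ (j : ℕ)
    · rw [dif_pos hj, hCrow, hCrow, if_neg (by omega)]; norm_num
    · rw [dif_neg hj, hCrow, if_pos (by omega)]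
      have : (j : ℕ) = 0 := by omega
      rw [this]; norm_num
  | succ i ih =>
    intro hi j
    have hi' : i ≤ n - 1 := by omega
    rw [show i + 1 + 2 = (i + 2) + 1 by ring, pow_succ, mulC_aux hn C hC]
    have hlast : (C ^ (i + 2)) ⟨n - 1, Nat.sub_lt hn one_pos⟩ ⟨n - 1, Nat.sub_lt hn one_pos⟩
        = 2 ^ (i + 1) := by
      rw [ih hi' _, if_neg (show ¬ (n - 1 : ℕ) ≤ i by omega), sub_zero]
    rw [hlast]
    have h2 : (2 : ℤ) ^ (i + 1 + 1) = 2 ^ (i + 1) + 2 ^ (i + 1) := by ring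
    by_cases hj : 1 ≤ (j : ℕ)
    · rw [dif_pos hj, ih hi' _]
      show 2 ^ (i + 1) - (if (j : ℕ) - 1 ≤ i then (2 : ℤ) ^ (i - ((j : ℕ) - 1)) else 0)
          + 2 ^ (i + 1)
        = 2 ^ (i + 1 + 1) - if (j : ℕ) ≤ i + 1 then 2 ^ (i + 1 - (j : ℕ)) else 0
      by_cases hji : (j : ℕ) ≤ i + 1
      · rw [if_pos (by omega), if_pos hji]
        have h1 : i - ((j : ℕ) - 1) = i + 1 - (j : ℕ) := by omega
        rw [h1, h2]; ring
      · rw [if_neg (by omega), if_neg hji, h2]; ring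
    · rw [dif_neg hj, if_pos (by omega)]
      have : (j : ℕ) = 0 := by omega
      rw [this, Nat.sub_zero, h2]; ring

theorem companion_power_formula (k : ℕ) (hk : 2 ≤ k)
    (C M L : Matrix (Fin (2 * k)) (Fin (2 * k)) ℤ)
    (hC : ∀ i j, C i j =
      if (j : ℕ) = (i : ℕ) + 1 then 1 else if (i : ℕ) = 2 * k - 1 then 1 else 0)
    (hM : ∀ i j, M i j = 2 ^ (i : ℕ))
    (hL : ∀ i j, L i j = if (j : ℕ) ≤ (i : ℕ) then 2 ^ ((i : ℕ) - (j : ℕ)) else 0) :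
    C ^ (2 * k + 1) = 2 • M - L := by
  have hn : 1 ≤ 2 * k := by omega
  ext i j
  have hi := i.isLt
  have hj := j.isLt
  set b : Fin (2 * k) := ⟨2 * k - 1, Nat.sub_lt hn one_pos⟩ with hb
  have hsplit : 2 * k + 1 = (2 * k - 1 - (i : ℕ)) + ((i : ℕ) + 2) := by omega
  rw [hsplit, pow_add, Matrix.mul_apply]
  have hterm : ∀ t : Fin (2 * k),
      (C ^ (2 * k - 1 - (i : ℕ))) i t * (C ^ ((i : ℕ) + 2)) t j
        = if t = b then (C ^ ((i : ℕ) + 2)) t j else 0 := by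
    intro t
    rw [shift_aux hn C hC _ i t (by omega)]
    have hcc : ((t : ℕ) = (i : ℕ) + (2 * k - 1 - (i : ℕ))) ↔ t = b := by
      rw [Fin.ext_iff]
      show (t : ℕ) = (i : ℕ) + (2 * k - 1 - (i : ℕ)) ↔ (t : ℕ) = 2 * k - 1
      omega
    rw [if_congr hcc rfl rfl]
    split_ifs <;> ring
  rw [Finset.sum_congr rfl (fun t _ => hterm t), Finset.sum_ite_eq' Finset.univ b]
  simp only [Finset.mem_univ, if_true, hb]
  rw [row_aux hn C hC (i : ℕ) (by omega) j]
  rw [Matrix.sub_apply, Matrix.smul_apply, hM, hL, nsmul_eq_mul]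
  push_cast
  ring
end

section
/- For all integers m ≥ 0 and w ≥ 0, Σ_{i=0}^{w} C(m+i, m)·2^i = (−1)^{m+1} + 2^{w+1} · Σ_{j=0}^{m} C(m+w+1, m−j)·(−2)^j, where C(a,b) denotes the binomial coefficient. -/
/-!
Write `S(m, n) = ∑_{j ≤ m} C(n, m - j) (-2)^j`. Pascal's rule gives `2 S(m, n + 1) = S(m, n) + C(n, m)`,
so the terms `2^i C(m + i, m)` are the differences of `2^i S(m, m + i)` and the left-hand side telescopes
to `2^(w+1) S(m, m + w + 1) - S(m, m)`, where `S(m, m) = (1 - 2)^m` by the binomial theorem.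
-/

open Finset

section LowerBinomialSum

variable {R : Type*} [CommRing R]

/-- The coefficient of `t^m` in `(1 + t)^n / (1 - x t)`. -/
def lowerBinomialSum (x : R) (m n : ℕ) : R :=
  ∑ j ∈ range (m + 1), (n.choose (m - j) : R) * x ^ j

theorem lowerBinomialSum_zero_left (x : R) (n : ℕ) : lowerBinomialSum x 0 n = 1 := by
  simp [lowerBinomialSum]

theorem lowerBinomialSum_succ_left (x : R) (m n : ℕ) :
    lowerBinomialSum x (m + 1) n = x * lowerBinomialSum x m n + n.choose (m + 1) := by
  rw [lowerBinomialSum, sum_range_succ', lowerBinomialSum, mul_sum]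
  congr 1
  · refine sum_congr rfl fun j _ => ?_
    rw [Nat.add_sub_add_right, pow_succ]
    ring
  · simp

theorem lowerBinomialSum_self (x : R) (m : ℕ) : lowerBinomialSum x m m = (x + 1) ^ m := by
  rw [add_pow, lowerBinomialSum]
  refine sum_congr rfl fun j hj => ?_
  rw [Nat.choose_symm (Nat.le_of_lt_succ (mem_range.mp hj)), one_pow, mul_one, mul_comm]

theorem mul_lowerBinomialSum_succ_right (x : R) (m n : ℕ) :
    x * lowerBinomialSum x m (n + 1) = (x + 1) * lowerBinomialSum x m n - n.choose m := by
  induction m with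
  | zero => simp [lowerBinomialSum_zero_left]
  | succ m ih =>
    have pascal : ((n + 1).choose (m + 1) : R) = n.choose m + n.choose (m + 1) := by
      rw [Nat.choose_succ_succ, Nat.cast_add]
    rw [lowerBinomialSum_succ_left, lowerBinomialSum_succ_left]
    linear_combination x * ih + x * pascal

end LowerBinomialSum

theorem two_pow_mul_choose_eq_sub (m i : ℕ) :
    ((m + i).choose m : ℤ) * 2 ^ i =
      2 ^ (i + 1) * lowerBinomialSum (-2) m (m + i + 1) - 2 ^ i * lowerBinomialSum (-2) m (m + i) := by
  linear_combination (2 : ℤ) ^ i * mul_lowerBinomialSum_succ_right (-2 : ℤ) m (m + i)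

theorem binomial_weighted_sum (m w : ℕ) :
    ∑ i ∈ Finset.range (w + 1), (Nat.choose (m + i) m : ℤ) * 2 ^ i =
      (-1) ^ (m + 1) +
        2 ^ (w + 1) * ∑ j ∈ Finset.range (m + 1), (Nat.choose (m + w + 1) (m - j) : ℤ) * (-2) ^ j := by
  have telescope := sum_range_sub (fun i => (2 : ℤ) ^ i * lowerBinomialSum (-2) m (m + i)) (w + 1)
  simp only [← add_assoc, ← two_pow_mul_choose_eq_sub, pow_zero, one_mul, add_zero,
    lowerBinomialSum_self] at telescope
  rw [telescope, lowerBinomialSum]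
  ring
end

section
/- Let {s_n} be a sequence of positive integers and p a prime. Assume there exist constants K_1, K_2 > 0, a constant 0 ≤ C < 1, and n_0 such that for all n ≥ n_0, ν_p(s_n) ≤ K_1 n^C and log s_n ≥ K_2 n. Then for each fixed positive integer d, the equation m! = s_{n_1} · s_{n_2} · ... · s_{n_d} has only finitely many solutions in positive integers (m, n_1, ..., n_d). -/
/-!
Compare `p`-adic valuations. On the left, `ν_p(m!) ≥ ⌊m/p⌋`. On the right, every factor satisfies
`s_{n_i} ≤ m!`, so the growth condition gives `n_i ≤ log(m!)/K₂ ≤ m log m / K₂` and hence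
`ν_p(s_{n_i}) ≪ (m log m)^C + 1`. Since `C < 1`, `m/p ≪ d ((m log m)^C + 1) = o(m)` bounds `m`,
and then `log s_{n_i} ≤ log m!` bounds every `n_i`.
-/

open Real Filter Asymptotics
open scoped Nat

theorem padicValNat_finset_prod {p : ℕ} [Fact p.Prime] {ι : Type*} (t : Finset ι) (f : ι → ℕ)
    (hf : ∀ i ∈ t, f i ≠ 0) : padicValNat p (∏ i ∈ t, f i) = ∑ i ∈ t, padicValNat p (f i) := by
  classical
  induction t using Finset.induction_on with
  | empty => simp
  | insert a t ha ih =>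
    rw [Finset.prod_insert ha, Finset.sum_insert ha,
      padicValNat.mul (hf a (by simp)) (Finset.prod_ne_zero_iff.2 fun i hi => hf i (by simp [hi])),
      ih fun i hi => hf i (by simp [hi])]

theorem div_le_padicValNat_factorial (p : ℕ) [hp : Fact p.Prime] (m : ℕ) :
    m / p ≤ padicValNat p m ! := by
  conv_rhs => rw [← Nat.div_add_mod m p]
  rw [padicValNat_factorial_mul_add _ (Nat.mod_lt m hp.out.pos), padicValNat_factorial_mul]
  exact Nat.le_add_left _ _

theorem Real.log_factorial_le (m : ℕ) : log m ! ≤ m * log m := by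
  rcases m.eq_zero_or_pos with rfl | hm
  · simp
  calc log m ! ≤ log ((m : ℝ) ^ m) :=
        log_le_log (by positivity) (by exact_mod_cast Nat.factorial_le_pow m)
    _ = m * log m := log_pow m m

theorem isLittleO_mul_log_rpow {C : ℝ} (hC : C < 1) :
    (fun x => (x * log x) ^ C) =o[atTop] id := by
  have h := (isBigO_refl (fun x : ℝ => x ^ C) atTop).mul_isLittleO
    (isLittleO_log_rpow_rpow_atTop C (sub_pos.2 hC))
  refine h.congr' ?_ ?_
  · filter_upwards [eventually_ge_atTop 1] with x hx
    rw [mul_rpow (by linarith) (log_nonneg hx)]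
  · filter_upwards [eventually_gt_atTop 0] with x hx
    rw [← rpow_add hx, add_sub_cancel, rpow_one, id]

theorem finite_setOf_natCast_le_of_isLittleO {f : ℝ → ℝ} (hf : f =o[atTop] id) :
    {m : ℕ | (m : ℝ) ≤ f m}.Finite := by
  have hlt : ∀ᶠ x : ℝ in atTop, f x < x := by
    filter_upwards [hf.def one_half_pos, eventually_gt_atTop 0] with x hfx hx
    rw [id, norm_of_nonneg hx.le] at hfx
    linarith [le_abs_self (f x), (norm_eq_abs (f x)) ▸ hfx]
  have := tendsto_natCast_atTop_atTop.eventually hlt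
  rw [← Nat.cofinite_eq_atTop, eventually_cofinite] at this
  simpa using this

theorem isLittleO_mul_log_div_rpow_add {C : ℝ} (hC : C < 1) {K : ℝ} (hK : 0 ≤ K) (a e : ℝ) :
    (fun x => a * (x * log x / K) ^ C + e) =o[atTop] id := by
  have h : (fun x => (x * log x / K) ^ C) =o[atTop] id := by
    refine ((isLittleO_mul_log_rpow hC).const_mul_left (K ^ C)⁻¹).congr' ?_ EventuallyEq.rfl
    filter_upwards [eventually_ge_atTop 1] with x hx
    rw [div_rpow (mul_nonneg (by linarith) (log_nonneg hx)) hK, inv_mul_eq_div]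
  exact (h.const_mul_left a).add (isLittleO_const_id_atTop e)

section Growth

variable {s : ℕ → ℕ} {K₂ : ℝ} {n₀ : ℕ}

theorem natCast_le_log_div_of_le (hs : ∀ n, 0 < s n) (hK₂ : 0 < K₂)
    (hgrow : ∀ n, n₀ ≤ n → log (s n) ≥ K₂ * n) {n N : ℕ} (hn : n₀ ≤ n) (hN : s n ≤ N) :
    (n : ℝ) ≤ log N / K₂ := by
  rw [le_div_iff₀' hK₂]
  exact (hgrow n hn).trans (log_le_log (by exact_mod_cast hs n) (by exact_mod_cast hN))

theorem finite_setOf_le_of_log_growth (hs : ∀ n, 0 < s n) (hK₂ : 0 < K₂)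
    (hgrow : ∀ n, n₀ ≤ n → log (s n) ≥ K₂ * n) (N : ℕ) : {n | s n ≤ N}.Finite := by
  refine ((Set.finite_Iio n₀).union (Set.finite_Iic ⌊log N / K₂⌋₊)).subset fun n hN => ?_
  rcases lt_or_ge n n₀ with hn | hn
  · exact Or.inl hn
  · exact Or.inr (Nat.le_floor (natCast_le_log_div_of_le hs hK₂ hgrow hn hN))

end Growth

section Valuation

variable {s : ℕ → ℕ} {p : ℕ} {K₁ K₂ C : ℝ} {n₀ b : ℕ}

theorem le_factorial_of_factorial_eq_prod (hs : ∀ n, 0 < s n) {d m : ℕ} {n : Fin d → ℕ}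
    (h : m ! = ∏ i, s (n i)) (i : Fin d) : s (n i) ≤ m ! :=
  h ▸ Finset.single_le_prod' (f := fun j => s (n j)) (fun j _ => hs (n j)) (Finset.mem_univ i)

theorem padicValNat_le_of_le_factorial (hs : ∀ n, 0 < s n) (hK₁ : 0 < K₁) (hK₂ : 0 < K₂)
    (hC0 : 0 ≤ C) (hval : ∀ n : ℕ, n₀ ≤ n → (padicValNat p (s n) : ℝ) ≤ K₁ * (n : ℝ) ^ C)
    (hgrow : ∀ n, n₀ ≤ n → log (s n) ≥ K₂ * n) (hb : ∀ n < n₀, padicValNat p (s n) ≤ b)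
    {m n : ℕ} (hn : s n ≤ m !) :
    (padicValNat p (s n) : ℝ) ≤ K₁ * (m * log m / K₂) ^ C + b := by
  rcases lt_or_ge n n₀ with hn₀ | hn₀
  · calc (padicValNat p (s n) : ℝ) ≤ b := by exact_mod_cast hb n hn₀
      _ ≤ K₁ * (m * log m / K₂) ^ C + b := le_add_of_nonneg_left (by positivity)
  · have hnX : (n : ℝ) ≤ m * log m / K₂ :=
      (natCast_le_log_div_of_le hs hK₂ hgrow hn₀ hn).trans
        (div_le_div_of_nonneg_right (log_factorial_le m) hK₂.le)
    calc (padicValNat p (s n) : ℝ) ≤ K₁ * (n : ℝ) ^ C := hval n hn₀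
      _ ≤ K₁ * (m * log m / K₂) ^ C := by gcongr
      _ ≤ K₁ * (m * log m / K₂) ^ C + b := le_add_of_nonneg_right b.cast_nonneg

theorem natCast_le_of_factorial_eq_prod [hp : Fact p.Prime] (hs : ∀ n, 0 < s n) (hK₁ : 0 < K₁)
    (hK₂ : 0 < K₂) (hC0 : 0 ≤ C)
    (hval : ∀ n : ℕ, n₀ ≤ n → (padicValNat p (s n) : ℝ) ≤ K₁ * (n : ℝ) ^ C)
    (hgrow : ∀ n, n₀ ≤ n → log (s n) ≥ K₂ * n) (hb : ∀ n < n₀, padicValNat p (s n) ≤ b)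
    {d m : ℕ} {n : Fin d → ℕ} (h : m ! = ∏ i, s (n i)) :
    (m : ℝ) ≤ p * d * K₁ * (m * log m / K₂) ^ C + p * (d * b + 1) := by
  have hvalm : ((m / p : ℕ) : ℝ) ≤ d * (K₁ * (m * log m / K₂) ^ C + b) := by
    calc ((m / p : ℕ) : ℝ) ≤ padicValNat p m ! := by
          exact_mod_cast div_le_padicValNat_factorial p m
      _ = ∑ i, (padicValNat p (s (n i)) : ℝ) := by
          rw [h, padicValNat_finset_prod _ _ fun i _ => (hs _).ne', Nat.cast_sum]
      _ ≤ ∑ _i : Fin d, (K₁ * (m * log m / K₂) ^ C + b) := by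
          gcongr with i
          exact padicValNat_le_of_le_factorial hs hK₁ hK₂ hC0 hval hgrow hb
            (le_factorial_of_factorial_eq_prod hs h i)
      _ = d * (K₁ * (m * log m / K₂) ^ C + b) := by
          rw [Finset.sum_const, Finset.card_univ, Fintype.card_fin, nsmul_eq_mul]
  calc (m : ℝ) ≤ p * ((m / p : ℕ) + 1 : ℕ) := by
        exact_mod_cast (Nat.lt_mul_div_succ m hp.out.pos).le
    _ ≤ p * (d * (K₁ * (m * log m / K₂) ^ C + b) + 1) := by push_cast; gcongr
    _ = p * d * K₁ * (m * log m / K₂) ^ C + p * (d * b + 1) := by ring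

end Valuation

theorem finitely_many_factorial_products_general (s : ℕ → ℕ) (hs : ∀ n, 0 < s n)
    (p : ℕ) (hp : p.Prime) (K₁ K₂ C : ℝ) (hK₁ : 0 < K₁) (hK₂ : 0 < K₂)
    (hC0 : 0 ≤ C) (hC1 : C < 1) (n₀ : ℕ)
    (hval : ∀ n : ℕ, n₀ ≤ n → (padicValNat p (s n) : ℝ) ≤ K₁ * (n : ℝ) ^ C)
    (hgrow : ∀ n : ℕ, n₀ ≤ n → Real.log (s n) ≥ K₂ * n)
    (d : ℕ) :
    {v : ℕ × (Fin d → ℕ) |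
        0 < v.1 ∧ (∀ i, 0 < v.2 i) ∧ v.1.factorial = ∏ i, s (v.2 i)}.Finite := by
  have : Fact p.Prime := ⟨hp⟩
  obtain ⟨b, hb⟩ : ∃ b, ∀ n < n₀, padicValNat p (s n) ≤ b :=
    ⟨(Finset.range n₀).sup fun n => padicValNat p (s n),
      fun n hn => Finset.le_sup (f := fun n => padicValNat p (s n)) (Finset.mem_range.2 hn)⟩
  have hm : {m : ℕ | (m : ℝ) ≤ p * d * K₁ * (m * log m / K₂) ^ C + p * (d * b + 1)}.Finite :=
    finite_setOf_natCast_le_of_isLittleO (isLittleO_mul_log_div_rpow_add hC1 hK₂.le _ _)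
  refine (hm.biUnion fun m _ => (Set.finite_singleton m).prod
    (Set.Finite.pi' fun _ => finite_setOf_le_of_log_growth hs hK₂ hgrow m !)).subset ?_
  rintro ⟨m, n⟩ ⟨-, -, h⟩
  exact Set.mem_biUnion (natCast_le_of_factorial_eq_prod hs hK₁ hK₂ hC0 hval hgrow hb h)
    ⟨rfl, le_factorial_of_factorial_eq_prod hs h⟩

theorem finitely_many_factorial_products (s : ℕ → ℕ) (hs : ∀ n, 0 < s n)
    (p : ℕ) (hp : p.Prime) (K₁ K₂ C : ℝ) (hK₁ : 0 < K₁) (hK₂ : 0 < K₂)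
    (hC0 : 0 ≤ C) (hC1 : C < 1) (n₀ : ℕ)
    (hval : ∀ n : ℕ, n₀ ≤ n → (padicValNat p (s n) : ℝ) ≤ K₁ * (n : ℝ) ^ C)
    (hgrow : ∀ n : ℕ, n₀ ≤ n → Real.log (s n) ≥ K₂ * n)
    (d : ℕ) (hd : 0 < d) :
    {v : ℕ × (Fin d → ℕ) |
        0 < v.1 ∧ (∀ i, 0 < v.2 i) ∧ v.1.factorial = ∏ i, s (v.2 i)}.Finite :=
  finitely_many_factorial_products_general s hs p hp K₁ K₂ C hK₁ hK₂ hC0 hC1 n₀ hval hgrow d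
end
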